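/- arXiv:1206.4172 — 2 statements merged into one kernel-verified Lean document; each statement's English description precedes it below -/
import Mathlib

section
/- If {ψ_k}_{k=1}^∞ is an orthonormal basis of eigenfunctions of the operator Cψ = Σ_{i=1}^m (ψ, y_i) y_i with eigenvalues λ_1 ≥ λ_2 ≥ ... ≥ 0, then for each l ≤ m the POD approximation error satisfies Σ_{i=1}^m ‖y_i − Σ_{j=1}^l (y_i, ψ_j)ψ_j‖² = Σ_{j=l+1}^m λ_j. -/
/-!
Pairing the eigen-equation `C ψ_k = λ_k ψ_k` with `ψ_k` gives `λ_k = Σᵢ (yᵢ, ψ_k)²`. Hence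
`λ_k = 0` for `k ≥ m` forces every `yᵢ` to be orthogonal to `ψ_k`, so by completeness of
`{ψ_k}` each `yᵢ` is the finite expansion `Σ_{j<m} (yᵢ, ψⱼ) ψⱼ`. The error of the `l`-term
truncation is then `Σ_{l≤j<m} (yᵢ, ψⱼ)ψⱼ`, whose squared norm is `Σ_{l≤j<m} (yᵢ, ψⱼ)²` by
Pythagoras; summing over `i` and exchanging the sums gives `Σ_{l≤j<m} λⱼ`.
-/

open MeasureTheory RealInnerProductSpace

section

variable {ι E : Type*} [NormedAddCommGroup E] [InnerProductSpace ℝ E]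

theorem inner_sum_inner_smul_self (s : Finset ι) (y : ι → E) (v : E) :
    ⟪∑ i ∈ s, ⟪v, y i⟫ • y i, v⟫ = ∑ i ∈ s, ⟪y i, v⟫ ^ 2 := by
  simp only [sum_inner, real_inner_smul_left]
  simp only [real_inner_comm v, sq]

theorem sum_inner_sq_eq_of_sum_inner_smul_eq {s : Finset ι} {y : ι → E} {v : E} {c : ℝ}
    (hv : ‖v‖ = 1) (h : ∑ i ∈ s, ⟪v, y i⟫ • y i = c • v) :
    ∑ i ∈ s, ⟪y i, v⟫ ^ 2 = c := by
  rw [← inner_sum_inner_smul_self, h, real_inner_smul_left, real_inner_self_eq_norm_sq, hv,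
    one_pow, mul_one]

theorem Orthonormal.norm_sum_smul_sq {ψ : ι → E} (hψ : Orthonormal ℝ ψ) (s : Finset ι)
    (c : ι → ℝ) : ‖∑ j ∈ s, c j • ψ j‖ ^ 2 = ∑ j ∈ s, c j ^ 2 := by
  rw [← real_inner_self_eq_norm_sq, hψ.inner_sum]
  simp only [conj_trivial, sq]

theorem Orthonormal.sum_inner_smul_eq_of_inner_eq_zero [CompleteSpace E] {ψ : ι → E}
    (hψ : Orthonormal ℝ ψ) (hdense : (Submodule.span ℝ (Set.range ψ)).topologicalClosure = ⊤)
    {s : Finset ι} {x : E} (hx : ∀ k ∉ s, ⟪x, ψ k⟫ = 0) :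
    ∑ j ∈ s, ⟪x, ψ j⟫ • ψ j = x := by
  have hsum := (HilbertBasis.mk hψ hdense.ge).hasSum_repr x
  simp only [HilbertBasis.repr_apply_apply, HilbertBasis.coe_mk, real_inner_comm x] at hsum
  exact ((hasSum_sum_of_ne_finset_zero fun k hk ↦ by rw [hx k hk, zero_smul]).unique hsum)

end

theorem pod_error_formula_general
    (d m : ℕ) (Ω : Set (EuclideanSpace ℝ (Fin d)))
    (y : Fin m → Lp ℝ 2 (volume.restrict Ω))
    (ψ : ℕ → Lp ℝ 2 (volume.restrict Ω))
    (hON : Orthonormal ℝ ψ)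
    (htotal : (Submodule.span ℝ (Set.range ψ)).topologicalClosure = ⊤)
    (lam : ℕ → ℝ)
    (heig : ∀ k, (∑ i, ⟪ψ k, y i⟫ • y i) = lam k • ψ k)
    (hzero : ∀ k, m ≤ k → lam k = 0) :
    ∀ l ≤ m,
      ∑ i, ‖y i - ∑ j ∈ Finset.range l, ⟪y i, ψ j⟫ • ψ j‖ ^ 2
        = ∑ j ∈ Finset.Ico l m, lam j := by
  intro l hl
  have hlam (k : ℕ) : ∑ i, ⟪y i, ψ k⟫ ^ 2 = lam k :=
    sum_inner_sq_eq_of_sum_inner_smul_eq (hON.1 k) (heig k)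
  have hcoef (i : Fin m) (k : ℕ) (hk : k ∉ Finset.range m) : ⟪y i, ψ k⟫ = 0 := by
    have hsq : ∑ i, ⟪y i, ψ k⟫ ^ 2 = 0 := by rw [hlam, hzero k (by simpa using hk)]
    exact pow_eq_zero_iff two_ne_zero |>.1 <|
      (Finset.sum_eq_zero_iff_of_nonneg fun _ _ ↦ sq_nonneg _).1 hsq i (Finset.mem_univ i)
  calc ∑ i, ‖y i - ∑ j ∈ Finset.range l, ⟪y i, ψ j⟫ • ψ j‖ ^ 2
      = ∑ i, ∑ j ∈ Finset.Ico l m, ⟪y i, ψ j⟫ ^ 2 := by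
        refine Finset.sum_congr rfl fun i _ ↦ ?_
        nth_rw 1 [← hON.sum_inner_smul_eq_of_inner_eq_zero htotal (hcoef i)]
        rw [← Finset.sum_Ico_eq_sub _ hl, hON.norm_sum_smul_sq]
    _ = ∑ j ∈ Finset.Ico l m, ∑ i, ⟪y i, ψ j⟫ ^ 2 := Finset.sum_comm
    _ = ∑ j ∈ Finset.Ico l m, lam j := Finset.sum_congr rfl fun j _ ↦ hlam j

/-- POD error formula: if `{ψ_k}` is an orthonormal basis of eigenfunctions of
the covariance operator `Cψ = Σᵢ (ψ, yᵢ)yᵢ` with eigenvalues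
`λ₁ ≥ λ₂ ≥ … ≥ 0`, `λ_j = 0` for `j > m`, then for each `l ≤ m`,
`Σᵢ ‖yᵢ − Σ_{j≤l} (yᵢ, ψⱼ)ψⱼ‖² = Σ_{j=l+1}^m λⱼ`. -/
theorem pod_error_formula
    (d m : ℕ) (Ω : Set (EuclideanSpace ℝ (Fin d))) (hΩ : Bornology.IsBounded Ω)
    (y : Fin m → Lp ℝ 2 (volume.restrict Ω))
    (hli : LinearIndependent ℝ y)
    (ψ : ℕ → Lp ℝ 2 (volume.restrict Ω))
    (hON : Orthonormal ℝ ψ)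
    (htotal : (Submodule.span ℝ (Set.range ψ)).topologicalClosure = ⊤)
    (lam : ℕ → ℝ)
    (heig : ∀ k, (∑ i, ⟪ψ k, y i⟫ • y i) = lam k • ψ k)
    (hdec : Antitone lam) (hpos : ∀ k, 0 ≤ lam k)
    (hzero : ∀ k, m ≤ k → lam k = 0) :
    ∀ l ≤ m,
      ∑ i, ‖y i - ∑ j ∈ Finset.range l, ⟪y i, ψ j⟫ • ψ j‖ ^ 2
        = ∑ j ∈ Finset.Ico l m, lam j :=
  pod_error_formula_general d m Ω y ψ hON htotal lam heig hzero
end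

section
/- Among all linear unbiased predictors c ∈ ℝ^n satisfying Fᵀc = f(x), the weights c(x) obtained from [[R, F],[Fᵀ, 0]](c, μ)ᵀ = (r(x), f(x))ᵀ minimize the quadratic form cᵀRc − 2cᵀr(x): for any c with Fᵀc = f(x), one has c(x)ᵀRc(x) − 2c(x)ᵀr(x) ≤ cᵀRc − 2cᵀr(x). -/
/-!
Write `c = c₀ + d`. Unbiasedness of both `c` and `c₀` gives `Fᵀd = 0`, so the stationarity
equation `R c₀ + F μ₀ = r` makes the linear term `2 dᵀ(R c₀ − r) = −2 (Fᵀd)ᵀμ₀` vanish, and the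
objective at `c` exceeds the one at `c₀` by `dᵀRd ≥ 0`.
-/

open Matrix

variable {α m p : Type*} [Fintype m] [Fintype p]

theorem Matrix.IsSymm.dotProduct_mulVec_comm [CommSemiring α] {R : Matrix m m α}
    (hR : R.IsSymm) (x y : m → α) : x ⬝ᵥ (R *ᵥ y) = y ⬝ᵥ (R *ᵥ x) := by
  rw [dotProduct_mulVec, ← mulVec_transpose, hR.eq, dotProduct_comm]

/-- The mean squared error of the linear predictor with weights `c`, up to the constant `σ²` and
the additive constant `R(x, x)`. -/
def krigingMSE [CommRing α] (R : Matrix m m α) (r c : m → α) : α :=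
  c ⬝ᵥ (R *ᵥ c) - 2 * (c ⬝ᵥ r)

theorem krigingMSE_eq_add [CommRing α] {R : Matrix m m α} (hR : R.IsSymm) (r c c₀ : m → α) :
    krigingMSE R r c = krigingMSE R r c₀ + (c - c₀) ⬝ᵥ (R *ᵥ (c - c₀))
      + 2 * ((c - c₀) ⬝ᵥ (R *ᵥ c₀ - r)) := by
  have hcomm := hR.dotProduct_mulVec_comm c₀ c
  simp only [krigingMSE, mulVec_sub, sub_dotProduct, dotProduct_sub] at hcomm ⊢
  linear_combination hcomm

theorem dotProduct_mulVec_eq_zero_of_transpose_mulVec_eq_zero [CommSemiring α]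
    {F : Matrix m p α} {d : m → α} (hd : Fᵀ *ᵥ d = 0) (μ : p → α) : d ⬝ᵥ (F *ᵥ μ) = 0 := by
  rw [dotProduct_mulVec, ← mulVec_transpose, hd, zero_dotProduct]

theorem krigingMSE_le_of_kkt [CommRing α] [PartialOrder α] [IsOrderedRing α] [StarRing α]
    [TrivialStar α] {R : Matrix m m α} (hR : R.PosSemidef) {F : Matrix m p α} {r c₀ c : m → α}
    {μ₀ : p → α} (hstat : R *ᵥ c₀ + F *ᵥ μ₀ = r) (hc : Fᵀ *ᵥ c = Fᵀ *ᵥ c₀) :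
    krigingMSE R r c₀ ≤ krigingMSE R r c := by
  have hsymm : R.IsSymm := by simpa using hR.isHermitian
  have hd : Fᵀ *ᵥ (c - c₀) = 0 := by rw [mulVec_sub, hc, sub_self]
  have hlinear : (c - c₀) ⬝ᵥ (R *ᵥ c₀ - r) = 0 := by
    rw [← hstat, sub_add_cancel_left, dotProduct_neg,
      dotProduct_mulVec_eq_zero_of_transpose_mulVec_eq_zero hd, neg_zero]
  have hquad : 0 ≤ (c - c₀) ⬝ᵥ (R *ᵥ (c - c₀)) := by
    simpa using hR.dotProduct_mulVec_nonneg (c - c₀)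
  rw [krigingMSE_eq_add hsymm r c c₀, hlinear, mul_zero, add_zero]
  exact le_add_of_nonneg_right hquad

theorem kriging_weights_optimal_general
    (n K : ℕ)
    (R : Matrix (Fin n) (Fin n) ℝ) (hR : R.PosDef)
    (F : Matrix (Fin n) (Fin K) ℝ)
    (r : Fin n → ℝ) (f : Fin K → ℝ)
    (c₀ : Fin n → ℝ) (μ₀ : Fin K → ℝ)
    (hsol : (Matrix.fromBlocks R F Fᵀ (0 : Matrix (Fin K) (Fin K) ℝ)) *ᵥ
      Sum.elim c₀ μ₀ = Sum.elim r f) :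
    ∀ c : Fin n → ℝ, Fᵀ *ᵥ c = f →
      c₀ ⬝ᵥ (R *ᵥ c₀) - 2 * (c₀ ⬝ᵥ r) ≤ c ⬝ᵥ (R *ᵥ c) - 2 * (c ⬝ᵥ r) := by
  intro c hc
  simp only [fromBlocks_mulVec, Sum.elim_comp_inl, Sum.elim_comp_inr, zero_mulVec, add_zero]
    at hsol
  obtain ⟨hstat, hunbiased⟩ := Sum.elim_eq_iff.mp hsol
  exact krigingMSE_le_of_kkt hR.posSemidef hstat (hc.trans hunbiased.symm)

/-- Among all unbiased weights `c` with `Fᵀc = f`, the KKT solution minimizes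
the quadratic form `cᵀRc − 2cᵀr`. -/
theorem kriging_weights_optimal
    (n K : ℕ) (hK : K ≤ n)
    (R : Matrix (Fin n) (Fin n) ℝ) (hR : R.PosDef)
    (F : Matrix (Fin n) (Fin K) ℝ) (hF : F.rank = K)
    (r : Fin n → ℝ) (f : Fin K → ℝ)
    (c₀ : Fin n → ℝ) (μ₀ : Fin K → ℝ)
    (hsol : (Matrix.fromBlocks R F Fᵀ (0 : Matrix (Fin K) (Fin K) ℝ)) *ᵥ
      Sum.elim c₀ μ₀ = Sum.elim r f) :
    ∀ c : Fin n → ℝ, Fᵀ *ᵥ c = f →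
      c₀ ⬝ᵥ (R *ᵥ c₀) - 2 * (c₀ ⬝ᵥ r) ≤ c ⬝ᵥ (R *ᵥ c) - 2 * (c ⬝ᵥ r) :=
  kriging_weights_optimal_general n K R hR F r f c₀ μ₀ hsol
end
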